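/- Let A be a unital associative k-algebra, p, q ∈ k, and X ⊆ k. Define R(u,v) : A ⊗ A → A ⊗ A by R(u,v)(a ⊗ b) = p(u−v)·1 ⊗ ab + q(u−v)·ab ⊗ 1 − (pu−qv)·b ⊗ a. Then for all u, v, w ∈ X: R¹²(u,v) ∘ R¹³(u,w) ∘ R²³(v,w) = R²³(v,w) ∘ R¹³(u,w) ∘ R¹²(u,v). -/

import Mathlib

open TensorProduct

noncomputable def r12 (k V : Type*) [Field k] [AddCommGroup V] [Module k V]
    (R : V ⊗[k] V →ₗ[k] V ⊗[k] V) :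
    (V ⊗[k] V) ⊗[k] V →ₗ[k] (V ⊗[k] V) ⊗[k] V :=
  TensorProduct.map R LinearMap.id

noncomputable def r23 (k V : Type*) [Field k] [AddCommGroup V] [Module k V]
    (R : V ⊗[k] V →ₗ[k] V ⊗[k] V) :
    (V ⊗[k] V) ⊗[k] V →ₗ[k] (V ⊗[k] V) ⊗[k] V :=
  (TensorProduct.assoc k V V V).symm.toLinearMap ∘ₗ
    TensorProduct.map LinearMap.id R ∘ₗ (TensorProduct.assoc k V V V).toLinearMap

noncomputable def tau (k V : Type*) [Field k] [AddCommGroup V] [Module k V] :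
    V ⊗[k] V →ₗ[k] V ⊗[k] V :=
  (TensorProduct.comm k V V).toLinearMap

noncomputable def r13 (k V : Type*) [Field k] [AddCommGroup V] [Module k V]
    (R : V ⊗[k] V →ₗ[k] V ⊗[k] V) :
    (V ⊗[k] V) ⊗[k] V →ₗ[k] (V ⊗[k] V) ⊗[k] V :=
  r23 k V (tau k V) ∘ₗ r12 k V R ∘ₗ r23 k V (tau k V)

/-- The braid equation. -/
def IsBraid (k V : Type*) [Field k] [AddCommGroup V] [Module k V]
    (R : V ⊗[k] V →ₗ[k] V ⊗[k] V) : Prop :=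
  r12 k V R ∘ₗ r23 k V R ∘ₗ r12 k V R = r23 k V R ∘ₗ r12 k V R ∘ₗ r23 k V R

/-- The (constant) quantum Yang–Baxter equation. -/
def IsQYBE (k V : Type*) [Field k] [AddCommGroup V] [Module k V]
    (R : V ⊗[k] V →ₗ[k] V ⊗[k] V) : Prop :=
  r12 k V R ∘ₗ r13 k V R ∘ₗ r23 k V R = r23 k V R ∘ₗ r13 k V R ∘ₗ r12 k V R

/-! On a pure tensor `a ⊗ b ⊗ c` each side of the equation expands into a combination of pure
tensors whose factors are `1` and ordered products of `a`, `b`, `c`; once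
the products are reassociated, the coefficients of equal tensors agree as polynomials in
`p, q, u, v, w`. -/

section LegNotation

variable {k V : Type*} [Field k] [AddCommGroup V] [Module k V]
  (R : V ⊗[k] V →ₗ[k] V ⊗[k] V)

theorem r12_tmul (x : V ⊗[k] V) (c : V) : r12 k V R (x ⊗ₜ c) = R x ⊗ₜ c := rfl

theorem r23_tmul (a b c : V) :
    r23 k V R ((a ⊗ₜ b) ⊗ₜ c) = (TensorProduct.assoc k V V V).symm (a ⊗ₜ R (b ⊗ₜ c)) := rfl

theorem tau_tmul (a b : V) : tau k V (a ⊗ₜ b) = b ⊗ₜ a := rfl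

theorem r13_tmul (a b c : V) :
    r13 k V R ((a ⊗ₜ b) ⊗ₜ c) = r23 k V (tau k V) (R (a ⊗ₜ c) ⊗ₜ b) := rfl

end LegNotation

theorem colored_qybe_of_algebra
    (k A : Type*) [Field k] [Ring A] [Algebra k A]
    (p q : k) (X : Set k)
    (R : k → k → (A ⊗[k] A →ₗ[k] A ⊗[k] A))
    (hR : ∀ u v : k, ∀ a b : A, R u v (a ⊗ₜ b) =
      (p * (u - v)) • ((1 : A) ⊗ₜ (a * b)) + (q * (u - v)) • ((a * b) ⊗ₜ (1 : A))
        - (p * u - q * v) • (b ⊗ₜ a)) :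
    ∀ u ∈ X, ∀ v ∈ X, ∀ w ∈ X,
      r12 k A (R u v) ∘ₗ r13 k A (R u w) ∘ₗ r23 k A (R v w) =
        r23 k A (R v w) ∘ₗ r13 k A (R u w) ∘ₗ r12 k A (R u v) := by
  intro u _ v _ w _
  refine ext_threefold fun a b c => ?_
  simp only [LinearMap.comp_apply, r12_tmul, r13_tmul, r23_tmul, tau_tmul, hR,
    map_add, map_sub, map_smul, add_tmul, sub_tmul, ← smul_tmul', tmul_add, tmul_sub,
    tmul_smul, assoc_symm_tmul, one_mul, mul_one, mul_assoc]
  module
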